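/- Let G be a finite simple graph with ivs_χ(G) > vs_χ(G) and 2·χ(G) ≥ Δ(G) + 2. Then |V(G)| ≥ 9, ivs_χ(G) ≥ 3, vs_χ(G) ≥ 2 and χ(G) ≥ 3. -/

import Mathlib

/-- The chromatic number of `G` as a natural number. -/
noncomputable def chi {V : Type*} [Fintype V] (G : SimpleGraph V) : ℕ :=
  G.chromaticNumber.toNat

/-- The maximum degree of `G` (classical version, no decidability assumptions). -/
noncomputable def maxDeg {V : Type*} [Fintype V] (G : SimpleGraph V) : ℕ :=
  @SimpleGraph.maxDegree V G _ (Classical.decRel _)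

/-- The degree of a vertex `v` of `G` (classical version). -/
noncomputable def deg {V : Type*} [Fintype V] (G : SimpleGraph V) (v : V) : ℕ :=
  @SimpleGraph.degree V G v (@SimpleGraph.neighborSetFintype V G _ (Classical.decRel _) v)

/-- The chromatic vertex stability of `G`: the minimum size of a set `S` of vertices
such that the subgraph induced on the complement of `S` has chromatic number `χ(G) - 1`. -/
noncomputable def vsChi {V : Type*} [Fintype V] [DecidableEq V] (G : SimpleGraph V) : ℕ :=
  sInf {n : ℕ | ∃ S : Finset V, S.card = n ∧
    chi (G.induce (↑(Sᶜ) : Set V)) = chi G - 1}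

/-- The independent chromatic vertex stability of `G`: the minimum size of an independent
set `S` of vertices such that the subgraph induced on the complement of `S` has chromatic
number `χ(G) - 1`. -/
noncomputable def ivsChi {V : Type*} [Fintype V] [DecidableEq V] (G : SimpleGraph V) : ℕ :=
  sInf {n : ℕ | ∃ S : Finset V, S.card = n ∧
    (∀ x ∈ S, ∀ y ∈ S, ¬ G.Adj x y) ∧
    chi (G.induce (↑(Sᶜ) : Set V)) = chi G - 1}

/-!
A colour class of an optimal colouring is an independent set whose removal lowers `χ`, so
`χ(G) · ivs_χ(G) ≤ |V(G)|`, and `|V(G)| ≥ 9` follows once `χ(G) ≥ 3` and `ivs_χ(G) ≥ 3`.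
The hypothesis `ivs_χ(G) > vs_χ(G)` fails whenever some minimum removal set is independent:
this is automatic if it has at most one vertex, which gives `vs_χ(G) ≥ 2`, or if `G` has no
edges, which excludes `χ(G) ≤ 1`. When `χ(G) = 2` the degree condition gives `Δ(G) ≤ 2`, and
removing `S` lowers `χ` exactly when `S` is a vertex cover with nonempty complement; in a
bipartite graph of maximum degree two every vertex cover can be made independent without
growing, which excludes `χ(G) = 2`.
-/

open SimpleGraph Finset

namespace SimpleGraph

variable {V : Type*} {G : SimpleGraph V}

theorem induce_eq_bot_iff {s : Set V} : G.induce s = ⊥ ↔ G.IsIndepSet s := by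
  rw [eq_bot_iff_forall_not_adj]
  exact ⟨fun h u hu v hv _ huv => h ⟨u, hu⟩ ⟨v, hv⟩ huv,
    fun h u v huv => h u.2 v.2 (G.ne_of_adj huv) huv⟩

theorem IsVertexCover.of_diff_singleton_subset {s t : Set V} {v : V} (hs : G.IsVertexCover s)
    (hst : s \ {v} ⊆ t) (hv : G.neighborSet v ⊆ t) : G.IsVertexCover t := by
  intro x y hxy
  rcases hs hxy with hx | hy
  · by_cases hxv : x = v
    · subst hxv
      exact Or.inr (hv hxy)
    · exact Or.inl (hst ⟨hx, hxv⟩)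
  · by_cases hyv : y = v
    · subst hyv
      exact Or.inl (hv hxy.symm)
    · exact Or.inr (hst ⟨hy, hyv⟩)

theorem neighborFinset_eq_pair_of_degree_le_two [DecidableEq V] {v a b : V}
    [Fintype (G.neighborSet v)] (hv : G.degree v ≤ 2) (ha : G.Adj v a) (hb : G.Adj v b)
    (hab : a ≠ b) : G.neighborFinset v = {a, b} := by
  refine (eq_of_subset_of_card_le ?_ ?_).symm
  · simp [insert_subset_iff, ha, hb]
  · rw [card_neighborFinset_eq_degree, card_pair hab]
    exact hv

variable [Fintype V] [DecidableEq V] [DecidableRel G.Adj]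

/-- Take an edge `uv` inside `S` with `c v = 1`. If every neighbour of `v` lies in `S`, delete
`v`; otherwise the neighbours of `v` are `u` and some `v' ∉ S` of colour `0`, and `v` is traded
for `v'`. -/
theorem exists_isVertexCover_of_not_isIndepSet (c : G.Coloring (Fin 2)) (hΔ : G.maxDegree ≤ 2)
    {S : Finset V} (hS : G.IsVertexCover S) (hind : ¬ G.IsIndepSet S) :
    ∃ T : Finset V, G.IsVertexCover T ∧ #T ≤ #S ∧
      2 * #T + #{x ∈ T | c x = 1} < 2 * #S + #{x ∈ S | c x = 1} := by
  obtain ⟨u, hu, v, hv, huv, hv1⟩ : ∃ u ∈ S, ∃ v ∈ S, G.Adj u v ∧ c v = 1 := by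
    simp only [isIndepSet_iff, Set.Pairwise, mem_coe, not_forall, not_not] at hind
    obtain ⟨x, hx, y, hy, -, hxy⟩ := hind
    have hc := c.valid hxy
    by_cases hy1 : c y = 1
    · exact ⟨x, hx, y, hy, hxy, hy1⟩
    · exact ⟨y, hy, x, hx, hxy.symm, by omega⟩
  have hv1S : v ∈ {x ∈ S | c x = 1} := mem_filter.mpr ⟨hv, hv1⟩
  have hS1pos := card_pos.mpr ⟨v, hv1S⟩
  by_cases hN : G.neighborSet v ⊆ S
  · refine ⟨S.erase v, ?_, card_erase_le, ?_⟩
    · refine hS.of_diff_singleton_subset (coe_erase v S).ge fun w hw => ?_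
      exact mem_erase.mpr ⟨(G.ne_of_adj hw).symm, hN hw⟩
    · have := card_le_card (filter_subset_filter (c · = 1) (erase_subset v S))
      have := card_erase_add_one hv
      omega
  · obtain ⟨v', hvv', hv'⟩ := Set.not_subset.mp hN
    have hN' := neighborFinset_eq_pair_of_degree_le_two ((G.degree_le_maxDegree v).trans hΔ)
      huv.symm hvv' (fun h => hv' (h ▸ hu))
    have hv'0 : c v' ≠ 1 := fun h => c.valid hvv' (hv1.trans h.symm)
    have hcard : #(insert v' (S.erase v)) = #S :=
      (card_insert_of_notMem fun h => hv' (mem_of_mem_erase h)).trans (card_erase_add_one hv)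
    refine ⟨insert v' (S.erase v), ?_, hcard.le, ?_⟩
    · refine hS.of_diff_singleton_subset ((coe_erase v S).ge.trans (coe_subset.mpr
        (subset_insert _ _))) fun w hw => ?_
      rw [mem_neighborSet, ← mem_neighborFinset, hN', mem_insert, mem_singleton] at hw
      rcases hw with rfl | rfl
      · exact mem_insert_of_mem (mem_erase.mpr ⟨G.ne_of_adj huv, hu⟩)
      · exact mem_insert_self _ _
    · rw [hcard, filter_insert, if_neg hv'0, filter_erase, card_erase_of_mem hv1S]
      omega

theorem exists_isIndepSet_isVertexCover_card_le (c : G.Coloring (Fin 2)) (hΔ : G.maxDegree ≤ 2)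
    {S : Finset V} (hS : G.IsVertexCover S) :
    ∃ T : Finset V, G.IsIndepSet T ∧ G.IsVertexCover T ∧ #T ≤ #S := by
  induction h : 2 * #S + #{x ∈ S | c x = 1} using Nat.strong_induction_on generalizing S with
  | _ n ih =>
    by_cases hind : G.IsIndepSet S
    · exact ⟨S, hind, hS, le_rfl⟩
    obtain ⟨T, hT, hTS, hlt⟩ := exists_isVertexCover_of_not_isIndepSet c hΔ hS hind
    obtain ⟨U, hU, hUcov, hUT⟩ := ih _ (h ▸ hlt) hT rfl
    exact ⟨U, hU, hUcov, hUT.trans hTS⟩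

end SimpleGraph

section ChromaticStability

variable {V : Type*} [Fintype V] {G : SimpleGraph V}

theorem chi_le_iff_colorable {n : ℕ} : chi G ≤ n ↔ G.Colorable n :=
  ⟨fun h => G.colorable_chromaticNumber_of_fintype.mono h,
    fun h => ENat.toNat_le_of_le_natCast h.chromaticNumber_le⟩

theorem colorable_chi (G : SimpleGraph V) : G.Colorable (chi G) :=
  G.colorable_chromaticNumber_of_fintype

theorem chi_eq_one_iff : chi G = 1 ↔ G = ⊥ ∧ Nonempty V := by
  rw [chi, ENat.toNat_eq_iff one_ne_zero, Nat.cast_one, chromaticNumber_eq_one_iff]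

theorem maxDeg_eq_maxDegree [DecidableRel G.Adj] : maxDeg G = G.maxDegree := by
  unfold maxDeg
  congr

theorem isIndepSet_coe_filter_color {α : Type*} [DecidableEq α] (c : G.Coloring α) (i : α) :
    G.IsIndepSet ↑({v | c v = i} : Finset V) := by
  rw [coe_filter_univ]
  exact c.isIndepSet_colorClass i

variable [DecidableEq V]

theorem chi_le_chi_induce_compl_add_one {S : Finset V} (hS : G.IsIndepSet S) :
    chi G ≤ chi (G.induce ↑(Sᶜ)) + 1 := by
  obtain ⟨c⟩ := colorable_chi (G.induce ↑(Sᶜ))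
  let c' : G.Coloring (Option (Fin (chi (G.induce ↑(Sᶜ))))) :=
    Coloring.mk (fun v => if hv : v ∈ S then none else some (c ⟨v, by simpa using hv⟩))
      fun {v w} hvw => by
        by_cases hv : v ∈ S <;> by_cases hw : w ∈ S <;> simp only [hv, hw, dite_true, dite_false]
        · exact fun _ => hS hv hw (G.ne_of_adj hvw) hvw
        · simp
        · simp
        · exact Option.some_injective _ |>.ne (c.valid hvw)
  simpa [chi_le_iff_colorable] using c'.colorable

theorem chi_induce_compl_filter_color (c : G.Coloring (Fin (chi G))) (i : Fin (chi G)) :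
    chi (G.induce ↑(({v | c v = i} : Finset V)ᶜ)) = chi G - 1 := by
  refine le_antisymm ?_ (Nat.sub_le_of_le_add
    (chi_le_chi_induce_compl_add_one (isIndepSet_coe_filter_color c i)))
  let c' : (G.induce ↑(({v | c v = i} : Finset V)ᶜ)).Coloring {j // j ≠ i} :=
    Coloring.mk (fun v => ⟨c v, by simpa using v.2⟩)
      fun hvw h => c.valid hvw (congrArg Subtype.val h)
  simpa [chi_le_iff_colorable, Fintype.card_subtype_compl] using c'.colorable

theorem chi_induce_compl_eq_one_iff {S : Finset V} :
    chi (G.induce ↑(Sᶜ)) = 1 ↔ G.IsVertexCover S ∧ #S < Fintype.card V := by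
  rw [chi_eq_one_iff, induce_eq_bot_iff, coe_compl, isIndepSet_compl_iff_isVertexCover,
    Set.nonempty_coe_sort, Set.nonempty_compl, Ne, coe_eq_univ, ← Ne, card_lt_iff_ne_univ]

theorem ivsChi_le_card {S : Finset V} (hS : G.IsIndepSet S)
    (h : chi (G.induce ↑(Sᶜ)) = chi G - 1) : ivsChi G ≤ #S :=
  Nat.sInf_le ⟨S, rfl, fun _ hx _ hy hxy => hS hx hy (G.ne_of_adj hxy) hxy, h⟩

theorem exists_card_eq_vsChi (hG : 0 < chi G) :
    ∃ S : Finset V, #S = vsChi G ∧ chi (G.induce ↑(Sᶜ)) = chi G - 1 := by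
  obtain ⟨c⟩ := colorable_chi G
  exact Nat.sInf_mem (s := {n | ∃ S : Finset V, #S = n ∧ chi (G.induce ↑(Sᶜ)) = chi G - 1})
    ⟨_, _, rfl, chi_induce_compl_filter_color c ⟨0, hG⟩⟩

theorem ivsChi_eq_vsChi_of_chi_le_one (hG : chi G ≤ 1) : ivsChi G = vsChi G := by
  have hbot : G = ⊥ := colorable_one_iff.mp (chi_le_iff_colorable.mp hG)
  subst hbot
  simp [ivsChi, vsChi]

theorem ivsChi_le_vsChi_of_vsChi_le_one (hG : 0 < chi G) (h : vsChi G ≤ 1) :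
    ivsChi G ≤ vsChi G := by
  obtain ⟨S, hcard, hS⟩ := exists_card_eq_vsChi hG
  have hSind : G.IsIndepSet S := fun x hx y hy hxy _ =>
    hxy (card_le_one.mp (hcard ▸ h) x hx y hy)
  exact hcard ▸ ivsChi_le_card hSind hS

theorem ivsChi_le_vsChi_of_chi_eq_two [DecidableRel G.Adj] (hG : chi G = 2)
    (hΔ : G.maxDegree ≤ 2) : ivsChi G ≤ vsChi G := by
  obtain ⟨S, hcard, hS⟩ := exists_card_eq_vsChi (G := G) (by omega)
  rw [hG, chi_induce_compl_eq_one_iff] at hS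
  obtain ⟨c⟩ : G.Colorable 2 := hG ▸ colorable_chi G
  obtain ⟨T, hT, hTcov, hTS⟩ := exists_isIndepSet_isVertexCover_card_le c hΔ hS.1
  have hT' : chi (G.induce ↑(Tᶜ)) = chi G - 1 := by
    rw [hG, chi_induce_compl_eq_one_iff]
    exact ⟨hTcov, hTS.trans_lt hS.2⟩
  exact hcard ▸ (ivsChi_le_card hT hT').trans hTS

theorem chi_mul_ivsChi_le_card : chi G * ivsChi G ≤ Fintype.card V := by
  by_contra! h
  have hG : 0 < chi G := Nat.pos_of_mul_pos_right (Nat.zero_lt_of_lt h)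
  obtain ⟨c⟩ := colorable_chi G
  have : Nonempty (Fin (chi G)) := ⟨⟨0, hG⟩⟩
  obtain ⟨i, hi⟩ := Fintype.exists_card_fiber_lt_of_card_lt_mul c (by simpa using h)
  exact hi.not_ge (ivsChi_le_card (isIndepSet_coe_filter_color c i)
    (chi_induce_compl_filter_color c i))

end ChromaticStability

/-- If `ivs_χ(G) > vs_χ(G)` and `2χ(G) ≥ Δ(G) + 2`, then `|V(G)| ≥ 9`, `ivs_χ(G) ≥ 3`,
`vs_χ(G) ≥ 2` and `χ(G) ≥ 3`. -/
theorem stmt_4 {V : Type*} [Fintype V] [DecidableEq V] (G : SimpleGraph V)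
    (h1 : ivsChi G > vsChi G) (h2 : 2 * chi G ≥ maxDeg G + 2) :
    Fintype.card V ≥ 9 ∧ ivsChi G ≥ 3 ∧ vsChi G ≥ 2 ∧ chi G ≥ 3 := by
  classical
  have hchi2 : 2 ≤ chi G := by
    by_contra! h
    exact h1.ne' (ivsChi_eq_vsChi_of_chi_le_one (by omega))
  have hvs : 2 ≤ vsChi G := by
    by_contra! h
    exact h1.not_ge (ivsChi_le_vsChi_of_vsChi_le_one (by omega) (by omega))
  have hchi3 : 3 ≤ chi G := by
    by_contra! h
    rw [maxDeg_eq_maxDegree] at h2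
    exact h1.not_ge (ivsChi_le_vsChi_of_chi_eq_two (by omega) (by omega))
  have hivs : 3 ≤ ivsChi G := by omega
  have hcard : 3 * 3 ≤ chi G * ivsChi G := Nat.mul_le_mul hchi3 hivs
  exact ⟨hcard.trans chi_mul_ivsChi_le_card, hivs, hvs, hchi3⟩
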